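/- arXiv:2005.08103 — 5 statements merged into one kernel-verified Lean document; each statement's English description precedes it below -/
import Mathlib

section
/- Let X ∈ 𝒢(n,m,d₁,d₂) and fix u₁ ∈ [n], v₁ ∈ [m] with X_{u₁v₁} = 0. Let s_{u₁v₁} be the number of tuples (u₂, u₃, v₂, v₃) with u₂, u₃ ∈ [n] and v₂, v₃ ∈ [m] such that u₁, u₂, u₃ are pairwise distinct, v₁, v₂, v₃ are pairwise distinct, X_{u₁v₂} = X_{u₂v₁} = X_{u₃v₃} = 1, and X_{u₂v₃} = X_{u₃v₂} = 0 (i.e., (u₁,u₂,u₃,v₁,v₂,v₃) is a valid forward switching for X). Then d₁²·d₂·(n − 2d₂) ≤ s_{u₁v₁} ≤ d₁²·d₂·(n − d₂). -/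
open scoped Classical BigOperators

noncomputable section

/-- The set of biadjacency matrices of `(n,m,d₁,d₂)`-bipartite biregular graphs. -/
def BBG (n m d₁ d₂ : ℕ) : Finset (Fin n → Fin m → Bool) :=
  Finset.univ.filter fun X =>
    (∀ u, (∑ v, if X u v then 1 else 0) = d₁) ∧
    (∀ v, (∑ u, if X u v then 1 else 0) = d₂)

/-!
Once `X u₁ v₁ = 0`, the six distinctness conditions of a forward switching are forced by the
pattern of ones and zeros, so a switching is a pair of independent choices: `(u₂, v₂)` with
`u₂ ∈ N(v₁)`, `v₂ ∈ N(u₁)` (`d₂ d₁` of them), and then an edge `u₃v₃` with `u₃ ∉ N(v₂)` and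
`v₃ ∉ N(u₂)`. The edges with `u₃ ∉ N(v₂)` number exactly `(n - d₂) d₁`, and at most `d₁ d₂` of
them have `v₃ ∈ N(u₂)`.
-/

open Finset

namespace BipartiteSwitching

section Switchings

variable {α β : Type*}

def IsForwardSwitching (X : α → β → Bool) (u₁ u₂ u₃ : α) (v₁ v₂ v₃ : β) : Prop :=
  u₂ ≠ u₁ ∧ u₃ ≠ u₁ ∧ u₂ ≠ u₃ ∧ v₂ ≠ v₁ ∧ v₃ ≠ v₁ ∧ v₂ ≠ v₃ ∧
    X u₁ v₂ = true ∧ X u₂ v₁ = true ∧ X u₃ v₃ = true ∧ X u₂ v₃ = false ∧ X u₃ v₂ = false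

theorem isForwardSwitching_iff {X : α → β → Bool} {u₁ u₂ u₃ : α} {v₁ v₂ v₃ : β}
    (h₀ : X u₁ v₁ = false) :
    IsForwardSwitching X u₁ u₂ u₃ v₁ v₂ v₃ ↔
      (X u₂ v₁ = true ∧ X u₁ v₂ = true) ∧ X u₃ v₃ = true ∧ X u₃ v₂ = false ∧ X u₂ v₃ = false := by
  constructor
  · rintro ⟨-, -, -, -, -, -, h₁₂, h₂₁, h₃₃, h₂₃, h₃₂⟩
    exact ⟨⟨h₂₁, h₁₂⟩, h₃₃, h₃₂, h₂₃⟩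
  · rintro ⟨⟨h₂₁, h₁₂⟩, h₃₃, h₃₂, h₂₃⟩
    -- each coincidence would make some entry of `X` both `true` and `false`
    refine ⟨?_, ?_, ?_, ?_, ?_, ?_, h₁₂, h₂₁, h₃₃, h₂₃, h₃₂⟩ <;> rintro rfl <;> simp_all

variable [Fintype α] [Fintype β]

/-- The choices of `(u₃, v₃)` that complete `(u₂, v₂)` to a forward switching. -/
def completions (X : α → β → Bool) (u₂ : α) (v₂ : β) : Finset (α × β) :=
  {q | X q.1 q.2 = true ∧ X q.1 v₂ = false ∧ X u₂ q.2 = false}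

theorem card_filter_prod_eq_sum (p : α × β → Prop) [DecidablePred p] :
    #{q | p q} = ∑ a, #{b | p (a, b)} := by
  simp only [card_filter, Fintype.sum_prod_type]

theorem card_filter_prod_eq_sum_right (p : α × β → Prop) [DecidablePred p] :
    #{q | p q} = ∑ b, #{a | p (a, b)} := by
  simp only [card_filter, Fintype.sum_prod_type_right]

theorem card_filter_const_and (c : Prop) [Decidable c] (p : α → Prop) [DecidablePred p] :
    #{a | c ∧ p a} = if c then #{a | p a} else 0 := by
  by_cases hc : c <;> simp [hc]

theorem card_filter_and_const (p : α → Prop) [DecidablePred p] (c : Prop) [Decidable c] :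
    #{a | p a ∧ c} = if c then #{a | p a} else 0 := by
  by_cases hc : c <;> simp [hc]

theorem sum_ite_eq_card_mul (p : α → Prop) [DecidablePred p] (c : ℕ) :
    (∑ a, if p a then c else 0) = #{a | p a} * c := by
  rw [← sum_filter, sum_const, smul_eq_mul]

theorem card_forwardSwitchings {X : α → β → Bool} {u₁ : α} {v₁ : β} (h₀ : X u₁ v₁ = false) :
    #{t : α × α × β × β | IsForwardSwitching X u₁ t.1 t.2.1 v₁ t.2.2.1 t.2.2.2} =
      ∑ p ∈ {p : α × β | X p.1 v₁ = true ∧ X u₁ p.2 = true}, #(completions X p.1 p.2) := by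
  let e : α × α × β × β ≃ (α × β) × (α × β) :=
    (Equiv.prodAssoc α α (β × β)).symm.trans (Equiv.prodProdProdComm α α β β)
  calc _ = #{x : (α × β) × (α × β) | (X x.1.1 v₁ = true ∧ X u₁ x.1.2 = true) ∧
        X x.2.1 x.2.2 = true ∧ X x.2.1 x.1.2 = false ∧ X x.1.1 x.2.2 = false} :=
        card_equiv e fun t => by simp [e, isForwardSwitching_iff h₀]
    _ = _ := by
      simp only [card_filter_prod_eq_sum, card_filter_const_and, sum_filter, completions]

end Switchings

def IsBiregular {α β : Type*} [Fintype α] [Fintype β] (X : α → β → Bool) (d₁ d₂ : ℕ) : Prop :=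
  (∀ u, #{v | X u v} = d₁) ∧ ∀ v, #{u | X u v} = d₂

theorem mem_BBG_iff {n m d₁ d₂ : ℕ} {X : Fin n → Fin m → Bool} :
    X ∈ BBG n m d₁ d₂ ↔ IsBiregular X d₁ d₂ := by
  simp only [BBG, IsBiregular, mem_filter, mem_univ, true_and, card_filter]

namespace IsBiregular

variable {α β : Type*} [Fintype α] [Fintype β] {X : α → β → Bool} {d₁ d₂ : ℕ}

theorem le_card (hX : IsBiregular X d₁ d₂) (v : β) : d₂ ≤ Fintype.card α :=
  hX.2 v ▸ card_le_univ _

theorem card_not_adj (hX : IsBiregular X d₁ d₂) (v : β) :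
    #{u | X u v = false} = Fintype.card α - d₂ := by
  rw [← hX.2 v, ← card_univ, ← card_filter_add_card_filter_not (s := univ) (p := fun u => X u v)]
  simp only [Bool.not_eq_true, Nat.add_sub_cancel_left]

theorem card_adj_pairs (hX : IsBiregular X d₁ d₂) (u : α) (v : β) :
    #{p : α × β | X p.1 v = true ∧ X u p.2 = true} = d₂ * d₁ := by
  simp only [card_filter_prod_eq_sum, card_filter_const_and, hX.1 u, sum_ite_eq_card_mul, hX.2 v]

theorem card_edges_not_adj (hX : IsBiregular X d₁ d₂) (v : β) :
    #{q : α × β | X q.1 q.2 = true ∧ X q.1 v = false} = (Fintype.card α - d₂) * d₁ := by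
  simp only [card_filter_prod_eq_sum, card_filter_and_const, hX.1, sum_ite_eq_card_mul,
    hX.card_not_adj v]

theorem card_edges_adj (hX : IsBiregular X d₁ d₂) (u : α) :
    #{q : α × β | X q.1 q.2 = true ∧ X u q.2 = true} = d₁ * d₂ := by
  simp only [card_filter_prod_eq_sum_right, card_filter_and_const, hX.2, sum_ite_eq_card_mul,
    hX.1 u]

theorem card_completions_le (hX : IsBiregular X d₁ d₂) (u : α) (v : β) :
    #(completions X u v) ≤ (Fintype.card α - d₂) * d₁ :=
  hX.card_edges_not_adj v ▸
    card_le_card (monotone_filter_right _ fun _ _ => And.imp_right And.left)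

theorem le_card_completions_add (hX : IsBiregular X d₁ d₂) (u : α) (v : β) :
    (Fintype.card α - d₂) * d₁ ≤ #(completions X u v) + d₁ * d₂ := by
  rw [← hX.card_edges_not_adj v, ← hX.card_edges_adj u]
  refine (card_le_card fun q hq => ?_).trans (card_union_le _ _)
  simp only [completions, mem_union, mem_filter, mem_univ, true_and] at hq ⊢
  cases X u q.2 <;> simp [hq]

variable {u₁ : α} {v₁ : β}

theorem card_forwardSwitchings_le (hX : IsBiregular X d₁ d₂) (h₀ : X u₁ v₁ = false) :
    #{t : α × α × β × β | IsForwardSwitching X u₁ t.1 t.2.1 v₁ t.2.2.1 t.2.2.2} ≤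
      d₂ * d₁ * ((Fintype.card α - d₂) * d₁) := by
  rw [card_forwardSwitchings h₀, ← hX.card_adj_pairs u₁ v₁, ← smul_eq_mul]
  exact sum_le_card_nsmul _ _ _ fun p _ => hX.card_completions_le p.1 p.2

theorem le_card_forwardSwitchings_add (hX : IsBiregular X d₁ d₂) (h₀ : X u₁ v₁ = false) :
    d₂ * d₁ * ((Fintype.card α - d₂) * d₁) ≤
      #{t : α × α × β × β | IsForwardSwitching X u₁ t.1 t.2.1 v₁ t.2.2.1 t.2.2.2} +
        d₂ * d₁ * (d₁ * d₂) := by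
  have h := card_nsmul_le_sum {p : α × β | X p.1 v₁ = true ∧ X u₁ p.2 = true} _ _
    fun p _ => hX.le_card_completions_add p.1 p.2
  rwa [sum_add_distrib, sum_const, ← card_forwardSwitchings h₀, hX.card_adj_pairs,
    smul_eq_mul, smul_eq_mul] at h

theorem card_forwardSwitchings_bounds (hX : IsBiregular X d₁ d₂) (h₀ : X u₁ v₁ = false) :
    (d₁ : ℝ) ^ 2 * d₂ * (Fintype.card α - 2 * d₂) ≤
        #{t : α × α × β × β | IsForwardSwitching X u₁ t.1 t.2.1 v₁ t.2.2.1 t.2.2.2} ∧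
      (#{t : α × α × β × β | IsForwardSwitching X u₁ t.1 t.2.1 v₁ t.2.2.1 t.2.2.2} : ℝ) ≤
        d₁ ^ 2 * d₂ * (Fintype.card α - d₂) := by
  have hle := (Nat.cast_le (α := ℝ)).mpr (hX.card_forwardSwitchings_le h₀)
  have hge := (Nat.cast_le (α := ℝ)).mpr (hX.le_card_forwardSwitchings_add h₀)
  push_cast [hX.le_card v₁] at hle hge
  exact ⟨by linear_combination hge, by linear_combination hle⟩

end IsBiregular

end BipartiteSwitching

open BipartiteSwitching

theorem forward_switching_count_general (n m d₁ d₂ : ℕ)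
    (X : Fin n → Fin m → Bool) (hX : X ∈ BBG n m d₁ d₂)
    (u₁ : Fin n) (v₁ : Fin m) (h₀ : X u₁ v₁ = false) :
    (d₁ : ℝ) ^ 2 * d₂ * ((n : ℝ) - 2 * d₂) ≤
      ((Finset.univ.filter fun t : Fin n × Fin n × Fin m × Fin m =>
          t.1 ≠ u₁ ∧ t.2.1 ≠ u₁ ∧ t.1 ≠ t.2.1 ∧
          t.2.2.1 ≠ v₁ ∧ t.2.2.2 ≠ v₁ ∧ t.2.2.1 ≠ t.2.2.2 ∧
          X u₁ t.2.2.1 = true ∧ X t.1 v₁ = true ∧ X t.2.1 t.2.2.2 = true ∧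
          X t.1 t.2.2.2 = false ∧ X t.2.1 t.2.2.1 = false).card : ℝ) ∧
    ((Finset.univ.filter fun t : Fin n × Fin n × Fin m × Fin m =>
          t.1 ≠ u₁ ∧ t.2.1 ≠ u₁ ∧ t.1 ≠ t.2.1 ∧
          t.2.2.1 ≠ v₁ ∧ t.2.2.2 ≠ v₁ ∧ t.2.2.1 ≠ t.2.2.2 ∧
          X u₁ t.2.2.1 = true ∧ X t.1 v₁ = true ∧ X t.2.1 t.2.2.2 = true ∧
          X t.1 t.2.2.2 = false ∧ X t.2.1 t.2.2.1 = false).card : ℝ)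
      ≤ (d₁ : ℝ) ^ 2 * d₂ * ((n : ℝ) - d₂) := by
  rw [mem_BBG_iff] at hX
  convert hX.card_forwardSwitchings_bounds h₀ using 5 <;> simp [IsForwardSwitching]

/-- Counting valid forward switchings: tuples `(u₂, u₃, v₂, v₃)` such that
`(u₁,u₂,u₃,v₁,v₂,v₃)` is a valid forward switching for `X`. -/
theorem forward_switching_count (n m d₁ d₂ : ℕ)
    (hn : 0 < n) (hm : 0 < m) (hd₁ : 0 < d₁) (hd₂ : 0 < d₂)
    (hbal : n * d₁ = m * d₂)
    (X : Fin n → Fin m → Bool) (hX : X ∈ BBG n m d₁ d₂)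
    (u₁ : Fin n) (v₁ : Fin m) (h₀ : X u₁ v₁ = false) :
    (d₁ : ℝ) ^ 2 * d₂ * ((n : ℝ) - 2 * d₂) ≤
      ((Finset.univ.filter fun t : Fin n × Fin n × Fin m × Fin m =>
          t.1 ≠ u₁ ∧ t.2.1 ≠ u₁ ∧ t.1 ≠ t.2.1 ∧
          t.2.2.1 ≠ v₁ ∧ t.2.2.2 ≠ v₁ ∧ t.2.2.1 ≠ t.2.2.2 ∧
          X u₁ t.2.2.1 = true ∧ X t.1 v₁ = true ∧ X t.2.1 t.2.2.2 = true ∧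
          X t.1 t.2.2.2 = false ∧ X t.2.1 t.2.2.1 = false).card : ℝ) ∧
    ((Finset.univ.filter fun t : Fin n × Fin n × Fin m × Fin m =>
          t.1 ≠ u₁ ∧ t.2.1 ≠ u₁ ∧ t.1 ≠ t.2.1 ∧
          t.2.2.1 ≠ v₁ ∧ t.2.2.2 ≠ v₁ ∧ t.2.2.1 ≠ t.2.2.2 ∧
          X u₁ t.2.2.1 = true ∧ X t.1 v₁ = true ∧ X t.2.1 t.2.2.2 = true ∧
          X t.1 t.2.2.2 = false ∧ X t.2.1 t.2.2.1 = false).card : ℝ)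
      ≤ (d₁ : ℝ) ^ 2 * d₂ * ((n : ℝ) - d₂) :=
  forward_switching_count_general n m d₁ d₂ X hX u₁ v₁ h₀
end
end

section
/- Let X ∈ 𝒢(n,m,d₁,d₂) and fix u₁ ∈ [n], v₁ ∈ [m] with X_{u₁v₁} = 1. Let t_{u₁v₁} be the number of tuples (u₂, u₃, v₂, v₃) with u₂, u₃ ∈ [n] and v₂, v₃ ∈ [m] such that u₁, u₂, u₃ are pairwise distinct, v₁, v₂, v₃ are pairwise distinct, X_{u₂v₃} = X_{u₃v₂} = 1, and X_{u₁v₂} = X_{u₂v₁} = X_{u₃v₃} = 0 (i.e., (u₁,u₂,u₃,v₁,v₂,v₃) is a valid backward switching for X). Then d₁²·(n − d₂)·(n − 2d₂) ≤ t_{u₁v₁} ≤ d₁²·(n − d₂)². -/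
/-!
Read a backward switching at `(u₁, v₁)` as a pair of edges: `u₃v₂` with `v₂ ∉ N(u₁)` and
`u₂v₃` with `u₂ ∉ N(v₁)`, subject only to `u₃v₃` being a non-edge; the (non-)adjacencies force all
distinctness conditions. Each kind of edge can be chosen in `d₁(n - d₂)` ways (for the first kind
by double counting, since `m d₂ = n d₁`), giving the upper bound `d₁²(n - d₂)²`. Given `u₂v₃`, a
choice of `u₃v₂` with `u₃v₃` an edge is an edge at one of the `d₂` neighbours of `v₃`, so at most
`d₁ d₂` choices are lost, giving the lower bound `d₁(n - d₂) (d₁(n - d₂) - d₁ d₂)`.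
-/

open scoped Classical BigOperators

noncomputable section

open Finset

theorem Finset.card_filter_eq_false {β : Type*} [Fintype β] (f : β → Bool) :
    #{v | f v = false} = Fintype.card β - #{v | f v = true} := by
  rw [← card_compl, compl_filter]
  simp

namespace Biregular

variable {α β : Type*} [Fintype α] [Fintype β] (X : α → β → Bool)

theorem card_filter_and_of_row {d : ℕ} (hrow : ∀ u, #{v | X u v = true} = d)
    (p : α → Prop) [DecidablePred p] :
    #{x : α × β | p x.1 ∧ X x.1 x.2 = true} = #{u | p u} * d := by
  rw [card_filter, Fintype.sum_prod_type]
  simp_rw [ite_and]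
  rw [sum_congr rfl fun u _ => sum_ite_irrel (p u) univ _ _]
  simp_rw [← card_filter, hrow, sum_ite, sum_const_zero, add_zero, sum_const, smul_eq_mul]

theorem card_filter_and_of_col {d : ℕ} (hcol : ∀ v, #{u | X u v = true} = d)
    (q : β → Prop) [DecidablePred q] :
    #{x : α × β | X x.1 x.2 = true ∧ q x.2} = d * #{v | q v} := by
  rw [card_filter, Fintype.sum_prod_type_right]
  simp_rw [and_comm (a := X _ _ = true), ite_and]
  rw [sum_congr rfl fun v _ => sum_ite_irrel (q v) univ _ _]
  simp_rw [← card_filter, hcol, sum_ite, sum_const_zero, add_zero, sum_const, smul_eq_mul,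
    mul_comm]

theorem card_mul_eq_mul_card {d₁ d₂ : ℕ} (hrow : ∀ u, #{v | X u v = true} = d₁)
    (hcol : ∀ v, #{u | X u v = true} = d₂) :
    Fintype.card α * d₁ = d₂ * Fintype.card β := by
  have hrows := card_filter_and_of_row X hrow fun _ => True
  have hcols := card_filter_and_of_col X hcol fun _ => True
  simp only [true_and, and_true, filter_true, card_univ] at hrows hcols
  rw [← hrows, ← hcols]

def edgesOffRow (u₁ : α) : Finset (α × β) := {x | X x.1 x.2 = true ∧ X u₁ x.2 = false}

def edgesOffCol (v₁ : β) : Finset (α × β) := {x | X x.1 v₁ = false ∧ X x.1 x.2 = true}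

def backwardSwitchings [DecidableEq α] [DecidableEq β] (u₁ : α) (v₁ : β) :
    Finset (α × α × β × β) :=
  {t | t.1 ≠ u₁ ∧ t.2.1 ≠ u₁ ∧ t.1 ≠ t.2.1 ∧
    t.2.2.1 ≠ v₁ ∧ t.2.2.2 ≠ v₁ ∧ t.2.2.1 ≠ t.2.2.2 ∧
    X t.1 t.2.2.2 = true ∧ X t.2.1 t.2.2.1 = true ∧
    X u₁ t.2.2.1 = false ∧ X t.1 v₁ = false ∧ X t.2.1 t.2.2.2 = false}

theorem card_edgesOffRow {d₁ d₂ : ℕ} (u₁ : α) (hrow : #{v | X u₁ v = true} = d₁)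
    (hcol : ∀ v, #{u | X u v = true} = d₂) :
    #(edgesOffRow X u₁) = d₂ * (Fintype.card β - d₁) := by
  rw [edgesOffRow, card_filter_and_of_col X hcol fun v => X u₁ v = false, card_filter_eq_false,
    hrow]

theorem card_edgesOffCol {d₁ d₂ : ℕ} (v₁ : β) (hrow : ∀ u, #{v | X u v = true} = d₁)
    (hcol : #{u | X u v₁ = true} = d₂) :
    #(edgesOffCol X v₁) = (Fintype.card α - d₂) * d₁ := by
  rw [edgesOffCol, card_filter_and_of_row X hrow fun u => X u v₁ = false,
    card_filter_eq_false fun u => X u v₁, hcol]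

/-- The six distinctness conditions are forced by the (non-)adjacencies. -/
theorem card_backwardSwitchings [DecidableEq α] [DecidableEq β] {u₁ : α} {v₁ : β}
    (h₁ : X u₁ v₁ = true) :
    #(backwardSwitchings X u₁ v₁) =
      #{e ∈ edgesOffRow X u₁ ×ˢ edgesOffCol X v₁ | X e.1.1 e.2.2 = false} := by
  refine card_nbij' (fun t => ((t.2.1, t.2.2.1), (t.1, t.2.2.2)))
    (fun e => (e.2.1, e.1.1, e.1.2, e.2.2)) ?_ ?_ (fun _ _ => rfl) (fun _ _ => rfl)
  · rintro ⟨u₂, u₃, v₂, v₃⟩ ht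
    simp only [backwardSwitchings, edgesOffRow, edgesOffCol, coe_filter, mem_product,
      mem_filter, mem_univ, true_and, Set.mem_ofPred_eq] at ht ⊢
    tauto
  · rintro ⟨⟨u₃, v₂⟩, ⟨u₂, v₃⟩⟩ he
    simp only [backwardSwitchings, edgesOffRow, edgesOffCol, coe_filter, mem_product,
      mem_filter, mem_univ, true_and, Set.mem_ofPred_eq] at he ⊢
    obtain ⟨⟨⟨h32, h12⟩, h21, h23⟩, h33⟩ := he
    refine ⟨?_, ?_, ?_, ?_, ?_, ?_, h23, h32, h12, h21, h33⟩ <;> rintro rfl <;> simp_all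

theorem card_filter_prod_adj_le {d₁ d₂ : ℕ} (hrow : ∀ u, #{v | X u v = true} = d₁)
    (hcol : ∀ v, #{u | X u v = true} = d₂) {A B : Finset (α × β)}
    (hA : ∀ x ∈ A, X x.1 x.2 = true) :
    #{e ∈ A ×ˢ B | X e.1.1 e.2.2 = true} ≤ d₂ * d₁ * #B := by
  refine card_le_mul_card_image_of_maps_to (f := Prod.snd) (fun e he => (mem_product.mp
    (mem_filter.mp he).1).2) _ fun y _ => ?_
  -- the edges `x` paired with `y` lie in the `d₁`-neighbourhoods of the `d₂` neighbours of `y.2`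
  calc #{e ∈ {e ∈ A ×ˢ B | X e.1.1 e.2.2 = true} | e.2 = y}
      ≤ #{x : α × β | X x.1 y.2 = true ∧ X x.1 x.2 = true} := by
        refine card_le_card_of_injOn Prod.fst (fun e he => ?_) fun e he e' he' h => ?_
        · simp only [coe_filter, mem_product, Set.mem_ofPred_eq, mem_filter, mem_univ,
            true_and] at he ⊢
          obtain ⟨⟨⟨hx, -⟩, hadj⟩, rfl⟩ := he
          exact ⟨hadj, hA _ hx⟩
        · simp only [coe_filter, Set.mem_ofPred_eq] at he he'
          exact Prod.ext h (he.2.trans he'.2.symm)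
    _ = d₂ * d₁ := by rw [card_filter_and_of_row X hrow fun u => X u y.2 = true, hcol]

theorem card_backwardSwitchings_bounds [DecidableEq α] [DecidableEq β] {d₁ d₂ : ℕ}
    (hrow : ∀ u, #{v | X u v = true} = d₁) (hcol : ∀ v, #{u | X u v = true} = d₂)
    {u₁ : α} {v₁ : β} (h₁ : X u₁ v₁ = true) :
    #(backwardSwitchings X u₁ v₁) ≤ ((Fintype.card α - d₂) * d₁) ^ 2 ∧
      ((Fintype.card α - d₂) * d₁) ^ 2 ≤
        #(backwardSwitchings X u₁ v₁) + d₂ * d₁ * ((Fintype.card α - d₂) * d₁) := by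
  have hB := card_edgesOffCol X v₁ hrow (hcol v₁)
  have hA : #(edgesOffRow X u₁) = (Fintype.card α - d₂) * d₁ := by
    rw [card_edgesOffRow X u₁ (hrow u₁) hcol, Nat.mul_sub, Nat.sub_mul,
      ← card_mul_eq_mul_card X hrow hcol, Nat.mul_comm d₂]
  have hsplit := card_filter_add_card_filter_not (s := edgesOffRow X u₁ ×ˢ edgesOffCol X v₁)
    (fun e => X e.1.1 e.2.2 = false)
  simp only [Bool.not_eq_false, card_product, hA, hB] at hsplit
  have hbad := card_filter_prod_adj_le X hrow hcol (A := edgesOffRow X u₁) (B := edgesOffCol X v₁)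
    fun x hx => (mem_filter.mp hx).2.1
  rw [hB] at hbad
  rw [card_backwardSwitchings X h₁, sq]
  constructor <;> linarith

end Biregular

theorem backward_switching_count_general (n m d₁ d₂ : ℕ)
    (X : Fin n → Fin m → Bool) (hX : X ∈ BBG n m d₁ d₂)
    (u₁ : Fin n) (v₁ : Fin m) (h₁ : X u₁ v₁ = true) :
    (d₁ : ℝ) ^ 2 * ((n : ℝ) - d₂) * ((n : ℝ) - 2 * d₂) ≤
      ((Finset.univ.filter fun t : Fin n × Fin n × Fin m × Fin m =>
          t.1 ≠ u₁ ∧ t.2.1 ≠ u₁ ∧ t.1 ≠ t.2.1 ∧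
          t.2.2.1 ≠ v₁ ∧ t.2.2.2 ≠ v₁ ∧ t.2.2.1 ≠ t.2.2.2 ∧
          X t.1 t.2.2.2 = true ∧ X t.2.1 t.2.2.1 = true ∧
          X u₁ t.2.2.1 = false ∧ X t.1 v₁ = false ∧ X t.2.1 t.2.2.2 = false).card : ℝ) ∧
    ((Finset.univ.filter fun t : Fin n × Fin n × Fin m × Fin m =>
          t.1 ≠ u₁ ∧ t.2.1 ≠ u₁ ∧ t.1 ≠ t.2.1 ∧
          t.2.2.1 ≠ v₁ ∧ t.2.2.2 ≠ v₁ ∧ t.2.2.1 ≠ t.2.2.2 ∧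
          X t.1 t.2.2.2 = true ∧ X t.2.1 t.2.2.1 = true ∧
          X u₁ t.2.2.1 = false ∧ X t.1 v₁ = false ∧ X t.2.1 t.2.2.2 = false).card : ℝ)
      ≤ (d₁ : ℝ) ^ 2 * ((n : ℝ) - d₂) ^ 2 := by
  obtain ⟨-, hrow, hcol⟩ := mem_filter.mp hX
  have hrow' : ∀ u, #{v | X u v = true} = d₁ := fun u => (card_filter _ _).trans (hrow u)
  have hcol' : ∀ v, #{u | X u v = true} = d₂ := fun v => (card_filter _ _).trans (hcol v)
  have hd₂ : d₂ ≤ n := hcol' v₁ ▸ (card_le_univ _).trans_eq (Fintype.card_fin n)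
  obtain ⟨hupper, hlower⟩ := Biregular.card_backwardSwitchings_bounds X hrow' hcol' h₁
  unfold Biregular.backwardSwitchings at hupper hlower
  rw [Fintype.card_fin] at hupper hlower
  have hupper' := (Nat.cast_le (α := ℝ)).mpr hupper
  have hlower' := (Nat.cast_le (α := ℝ)).mpr hlower
  push_cast [hd₂] at hupper' hlower'
  constructor <;> nlinarith

/-- Counting valid backward switchings: tuples `(u₂, u₃, v₂, v₃)` such that
`(u₁,u₂,u₃,v₁,v₂,v₃)` is a valid backward switching for `X`. -/
theorem backward_switching_count (n m d₁ d₂ : ℕ)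
    (hn : 0 < n) (hm : 0 < m) (hd₁ : 0 < d₁) (hd₂ : 0 < d₂)
    (hbal : n * d₁ = m * d₂)
    (X : Fin n → Fin m → Bool) (hX : X ∈ BBG n m d₁ d₂)
    (u₁ : Fin n) (v₁ : Fin m) (h₁ : X u₁ v₁ = true) :
    (d₁ : ℝ) ^ 2 * ((n : ℝ) - d₂) * ((n : ℝ) - 2 * d₂) ≤
      ((Finset.univ.filter fun t : Fin n × Fin n × Fin m × Fin m =>
          t.1 ≠ u₁ ∧ t.2.1 ≠ u₁ ∧ t.1 ≠ t.2.1 ∧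
          t.2.2.1 ≠ v₁ ∧ t.2.2.2 ≠ v₁ ∧ t.2.2.1 ≠ t.2.2.2 ∧
          X t.1 t.2.2.2 = true ∧ X t.2.1 t.2.2.1 = true ∧
          X u₁ t.2.2.1 = false ∧ X t.1 v₁ = false ∧ X t.2.1 t.2.2.2 = false).card : ℝ) ∧
    ((Finset.univ.filter fun t : Fin n × Fin n × Fin m × Fin m =>
          t.1 ≠ u₁ ∧ t.2.1 ≠ u₁ ∧ t.1 ≠ t.2.1 ∧
          t.2.2.1 ≠ v₁ ∧ t.2.2.2 ≠ v₁ ∧ t.2.2.1 ≠ t.2.2.2 ∧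
          X t.1 t.2.2.2 = true ∧ X t.2.1 t.2.2.1 = true ∧
          X u₁ t.2.2.1 = false ∧ X t.1 v₁ = false ∧ X t.2.1 t.2.2.2 = false).card : ℝ)
      ≤ (d₁ : ℝ) ^ 2 * ((n : ℝ) - d₂) ^ 2 :=
  backward_switching_count_general n m d₁ d₂ X hX u₁ v₁ h₁
end
end

section
/- Let X be drawn uniformly from the nonempty set 𝒢(n,m,d₁,d₂). For any fixed x ∈ S^{n−1} and y ∈ S₀^{m−1}, the light part f_{L(x,y)}(X) = Σ_{(u,v)∈L(x,y)} x_u·y_v·X_{uv} satisfies |𝔼 f_{L(x,y)}(X)| ≤ √d₁. -/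
/-! Permuting columns preserves `BBG`, so every entry `X_uv` has the same mean, which the row
sums force to be `d₁ / m`; hence the mean of the light part is `(d₁ / m) ∑_{L} x_u y_v`. Since
`∑ y_v = 0`, the light sum is minus the heavy sum, and on a heavy couple
`(√d₁ / m) |x_u y_v| ≤ (x_u y_v)²`, whose total over all couples is `1`. -/

open scoped Classical BigOperators

noncomputable section

/-- The light part of the bilinear form `⟨x, Xy⟩`:
the sum over pairs `(u,v)` with `|x_u·y_v| ≤ √d₁/m`. -/
def fLight {n m : ℕ} (d₁ : ℕ) (x : Fin n → ℝ) (y : Fin m → ℝ)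
    (X : Fin n → Fin m → Bool) : ℝ :=
  ∑ q ∈ Finset.univ.filter
      (fun q : Fin n × Fin m => |x q.1 * y q.2| ≤ Real.sqrt d₁ / m),
    x q.1 * y q.2 * (if X q.1 q.2 then (1 : ℝ) else 0)

theorem mul_abs_sum_filter_abs_le_le_sum_sq {ι : Type*} [Fintype ι] (t : ι → ℝ)
    (ht : ∑ i, t i = 0) {c : ℝ} (hc : 0 ≤ c) :
    c * |∑ i ∈ Finset.univ.filter (fun i => |t i| ≤ c), t i| ≤ ∑ i, t i ^ 2 := by
  have hsplit := Finset.sum_filter_add_sum_filter_not Finset.univ (fun i => |t i| ≤ c) t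
  rw [ht, add_eq_zero_iff_eq_neg] at hsplit
  calc c * |∑ i ∈ Finset.univ.filter (fun i => |t i| ≤ c), t i|
      = c * |∑ i ∈ Finset.univ.filter (fun i => ¬ |t i| ≤ c), t i| := by
        rw [hsplit, abs_neg]
    _ ≤ ∑ i ∈ Finset.univ.filter (fun i => ¬ |t i| ≤ c), c * |t i| := by
        rw [← Finset.mul_sum]
        exact mul_le_mul_of_nonneg_left (Finset.abs_sum_le_sum_abs _ _) hc
    _ ≤ ∑ i ∈ Finset.univ.filter (fun i => ¬ |t i| ≤ c), t i ^ 2 := by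
        refine Finset.sum_le_sum fun i hi => ?_
        rw [Finset.mem_filter, not_le] at hi
        rw [← sq_abs, sq]
        exact mul_le_mul_of_nonneg_right hi.2.le (abs_nonneg _)
    _ ≤ ∑ i, t i ^ 2 :=
        Finset.sum_le_sum_of_subset_of_nonneg (Finset.filter_subset _ _)
          fun i _ _ => sq_nonneg _

section ColumnSymmetry

variable {n m d₁ d₂ : ℕ}

theorem colPerm_mem_BBG (σ : Equiv.Perm (Fin m)) {X : Fin n → Fin m → Bool}
    (hX : X ∈ BBG n m d₁ d₂) : (fun u v => X u (σ v)) ∈ BBG n m d₁ d₂ := by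
  simp only [BBG, Finset.mem_filter, Finset.mem_univ, true_and] at hX ⊢
  exact ⟨fun u => (Equiv.sum_comp σ fun v => if X u v then 1 else 0).trans (hX.1 u),
    fun v => hX.2 (σ v)⟩

theorem sum_BBG_comp_colPerm (σ : Equiv.Perm (Fin m)) (f : (Fin n → Fin m → Bool) → ℝ) :
    ∑ X ∈ BBG n m d₁ d₂, f (fun u v => X u (σ v)) = ∑ X ∈ BBG n m d₁ d₂, f X :=
  Finset.sum_nbij' (fun X u v => X u (σ v)) (fun X u v => X u (σ.symm v))
    (fun _ hX => colPerm_mem_BBG σ hX) (fun _ hX => colPerm_mem_BBG σ.symm hX)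
    (fun _ _ => by simp) (fun _ _ => by simp) (fun _ _ => rfl)

theorem sum_BBG_indicator_congr_col (u : Fin n) (v v' : Fin m) :
    ∑ X ∈ BBG n m d₁ d₂, (if X u v then (1 : ℝ) else 0)
      = ∑ X ∈ BBG n m d₁ d₂, (if X u v' then (1 : ℝ) else 0) := by
  simpa using sum_BBG_comp_colPerm (d₁ := d₁) (d₂ := d₂) (Equiv.swap v v')
    fun X => if X u v' then (1 : ℝ) else 0

theorem sum_BBG_indicator (u : Fin n) (v : Fin m) :
    ∑ X ∈ BBG n m d₁ d₂, (if X u v then (1 : ℝ) else 0)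
      = (BBG n m d₁ d₂).card * ((d₁ : ℝ) / m) := by
  have hm : (m : ℝ) ≠ 0 := Nat.cast_ne_zero.mpr v.pos.ne'
  have hrow : ∑ v' : Fin m, ∑ X ∈ BBG n m d₁ d₂, (if X u v' then (1 : ℝ) else 0)
      = (BBG n m d₁ d₂).card * d₁ := by
    rw [Finset.sum_comm, ← nsmul_eq_mul, ← Finset.sum_const]
    refine Finset.sum_congr rfl fun X hX => ?_
    simp only [BBG, Finset.mem_filter, Finset.mem_univ, true_and] at hX
    exact_mod_cast hX.1 u
  rw [Finset.sum_congr rfl fun v' _ => sum_BBG_indicator_congr_col (d₂ := d₂) u v' v,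
    Finset.sum_const, Finset.card_univ, Fintype.card_fin, nsmul_eq_mul] at hrow
  rw [mul_div_assoc', eq_div_iff hm, ← hrow, mul_comm]

theorem sum_BBG_fLight (x : Fin n → ℝ) (y : Fin m → ℝ) :
    ∑ X ∈ BBG n m d₁ d₂, fLight d₁ x y X
      = (BBG n m d₁ d₂).card * ((d₁ : ℝ) / m *
          ∑ q ∈ Finset.univ.filter
            (fun q : Fin n × Fin m => |x q.1 * y q.2| ≤ Real.sqrt d₁ / m), x q.1 * y q.2) := by
  unfold fLight
  rw [Finset.sum_comm, ← mul_assoc, Finset.mul_sum]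
  refine Finset.sum_congr rfl fun q _ => ?_
  rw [← Finset.mul_sum, sum_BBG_indicator]
  ring

end ColumnSymmetry

theorem light_part_mean_bound_general (n m d₁ d₂ : ℕ)
    (hne : (BBG n m d₁ d₂).Nonempty)
    (x : Fin n → ℝ) (hx : ∑ u, (x u) ^ 2 = 1)
    (y : Fin m → ℝ) (hy : ∑ v, (y v) ^ 2 = 1) (hy0 : ∑ v, y v = 0) :
    |(∑ X ∈ BBG n m d₁ d₂, fLight d₁ x y X) / ((BBG n m d₁ d₂).card : ℝ)|
      ≤ Real.sqrt d₁ := by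
  have hsum : ∑ q : Fin n × Fin m, x q.1 * y q.2 = 0 := by
    rw [Fintype.sum_prod_type, ← Finset.sum_mul_sum, hy0, mul_zero]
  have hsq : ∑ q : Fin n × Fin m, (x q.1 * y q.2) ^ 2 = 1 := by
    simp only [mul_pow, Fintype.sum_prod_type]
    rw [← Finset.sum_mul_sum, hx, hy, mul_one]
  have hlight := mul_abs_sum_filter_abs_le_le_sum_sq (fun q : Fin n × Fin m => x q.1 * y q.2)
    hsum (c := Real.sqrt d₁ / m) (by positivity)
  have hcard : ((BBG n m d₁ d₂).card : ℝ) ≠ 0 := Nat.cast_ne_zero.mpr hne.card_pos.ne'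
  have hdm : (d₁ : ℝ) / m = Real.sqrt d₁ * (Real.sqrt d₁ / m) := by
    rw [mul_div_assoc', Real.mul_self_sqrt (Nat.cast_nonneg _)]
  rw [sum_BBG_fLight, mul_div_cancel_left₀ _ hcard, hdm, mul_assoc, abs_mul,
    abs_of_nonneg (Real.sqrt_nonneg _), abs_mul, abs_of_nonneg (by positivity)]
  calc Real.sqrt d₁ * (Real.sqrt d₁ / m * |_|) ≤ Real.sqrt d₁ * 1 :=
        mul_le_mul_of_nonneg_left (hlight.trans hsq.le) (Real.sqrt_nonneg _)
    _ = Real.sqrt d₁ := mul_one _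

theorem light_part_mean_bound (n m d₁ d₂ : ℕ)
    (hn : 0 < n) (hm : 0 < m) (hd₁ : 0 < d₁) (hd₂ : 0 < d₂)
    (hbal : n * d₁ = m * d₂) (hne : (BBG n m d₁ d₂).Nonempty)
    (x : Fin n → ℝ) (hx : ∑ u, (x u) ^ 2 = 1)
    (y : Fin m → ℝ) (hy : ∑ v, (y v) ^ 2 = 1) (hy0 : ∑ v, y v = 0) :
    |(∑ X ∈ BBG n m d₁ d₂, fLight d₁ x y X) / ((BBG n m d₁ d₂).card : ℝ)|
      ≤ Real.sqrt d₁ :=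
  light_part_mean_bound_general n m d₁ d₂ hne x hx y hy hy0
end
end

section
/- Let X ∈ 𝒢(n,m,d₁,d₂) and fix distinct u₁, u₂ ∈ [n] and v₁ ∈ [m] with X_{u₁v₁} = 1 and X_{u₂v₁} = 0. Let s^{(1)}_{u₁u₂v₁} be the number of tuples (u₃, u₄, v₂, v₃) with u₃, u₄ ∈ [n], v₂, v₃ ∈ [m], u₃ ≠ u₁, X_{u₂v₂} = X_{u₃v₁} = X_{u₄v₃} = 1, and X_{u₃v₃} = X_{u₄v₂} = 0 (i.e., (u₁,u₂,u₃,u₄,v₁,v₂,v₃) is a valid Type 1 forward switching for X). Then d₁²·(d₂−1)·(n − 2d₂) ≤ s^{(1)}_{u₁u₂v₁} ≤ d₁²·(d₂−1)·(n − d₂). -/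
/-!
A switching is built in two stages: first a pair `(u₃, v₂)` with `u₃ ≠ u₁` a neighbour of `v₁`
and `v₂` a neighbour of `u₂` (there are `(d₂ - 1) d₁` of them), then an edge `u₄v₃` with
`u₃v₃` and `u₄v₂` non-edges. Among the `n d₁` edges, exactly `d₂ d₁` have `u₄` adjacent to `v₂`
and exactly `d₁ d₂` have `v₃` adjacent to `u₃`. Discarding the former bounds the number of
choices in the second stage by `n d₁ - d₁ d₂`; discarding both gives at least `n d₁ - 2 d₁ d₂`.
-/

open scoped Classical BigOperators

noncomputable section

open Finset

section Switchings

variable {α β : Type*} [Fintype α] [Fintype β] (X : α → β → Bool)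

def edges : Finset (α × β) := {p | X p.1 p.2}

def edgeChoices (u₃ : α) (v₂ : β) : Finset (α × β) :=
  {p ∈ edges X | X u₃ p.2 = false ∧ X p.1 v₂ = false}

section Degrees

variable {X} {d₁ d₂ : ℕ}

lemma card_edges (hr : ∀ u, #{v | X u v} = d₁) : #(edges X) = Fintype.card α * d₁ := by
  rw [edges, card_filter, Fintype.sum_prod_type]
  simp only [← card_filter, hr, sum_const, card_univ, smul_eq_mul]

lemma card_edges_filter_snd (hr : ∀ u, #{v | X u v} = d₁) (hc : ∀ v, #{u | X u v} = d₂)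
    (u₃ : α) : #{p ∈ edges X | X u₃ p.2} = d₁ * d₂ := by
  rw [edges, filter_filter, card_filter, Fintype.sum_prod_type_right]
  calc ∑ v, ∑ u, (if X u v = true ∧ X u₃ v = true then 1 else 0)
      = ∑ v, if X u₃ v then d₂ else 0 := sum_congr rfl fun v _ => by
        by_cases h : X u₃ v <;> simp [h, ← hc v]
    _ = d₁ * d₂ := by rw [← sum_filter, sum_const, hr, smul_eq_mul]

lemma card_edges_filter_fst (hr : ∀ u, #{v | X u v} = d₁) (hc : ∀ v, #{u | X u v} = d₂)
    (v₂ : β) : #{p ∈ edges X | X p.1 v₂} = d₂ * d₁ := by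
  rw [edges, filter_filter, card_filter, Fintype.sum_prod_type]
  calc ∑ u, ∑ v, (if X u v = true ∧ X u v₂ = true then 1 else 0)
      = ∑ u, if X u v₂ then d₁ else 0 := sum_congr rfl fun u _ => by
        by_cases h : X u v₂ <;> simp [h, ← hr u]
    _ = d₂ * d₁ := by rw [← sum_filter, sum_const, hc, smul_eq_mul]

lemma card_edgeChoices_add_le (hr : ∀ u, #{v | X u v} = d₁) (hc : ∀ v, #{u | X u v} = d₂)
    (u₃ : α) (v₂ : β) : #(edgeChoices X u₃ v₂) + d₂ * d₁ ≤ Fintype.card α * d₁ := by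
  calc #(edgeChoices X u₃ v₂) + d₂ * d₁
      ≤ #{p ∈ edges X | X p.1 v₂} + #{p ∈ edges X | ¬ X p.1 v₂} := by
        rw [add_comm, card_edges_filter_fst hr hc]
        gcongr
        intro p hp
        simp_all [edgeChoices]
    _ = Fintype.card α * d₁ := by rw [card_filter_add_card_filter_not, card_edges hr]

lemma le_card_edgeChoices_add (hr : ∀ u, #{v | X u v} = d₁) (hc : ∀ v, #{u | X u v} = d₂)
    (u₃ : α) (v₂ : β) :
    Fintype.card α * d₁ ≤ #(edgeChoices X u₃ v₂) + d₁ * d₂ + d₂ * d₁ := by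
  calc Fintype.card α * d₁ = #(edges X) := (card_edges hr).symm
    _ ≤ #(edgeChoices X u₃ v₂ ∪ {p ∈ edges X | X u₃ p.2} ∪ {p ∈ edges X | X p.1 v₂}) := by
        gcongr
        intro p hp
        by_cases h₃ : X u₃ p.2 <;> by_cases h₂ : X p.1 v₂ <;> simp_all [edgeChoices]
    _ ≤ #(edgeChoices X u₃ v₂) + #{p ∈ edges X | X u₃ p.2} + #{p ∈ edges X | X p.1 v₂} :=
        (card_union_le _ _).trans (Nat.add_le_add_right (card_union_le _ _) _)
    _ = _ := by rw [card_edges_filter_snd hr hc, card_edges_filter_fst hr hc]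

end Degrees

variable [DecidableEq α]

def neighbourChoices (u₁ u₂ : α) (v₁ : β) : Finset (α × β) :=
  ({u | u ≠ u₁ ∧ X u v₁} : Finset α) ×ˢ ({v | X u₂ v} : Finset β)

def type1Switchings (u₁ u₂ : α) (v₁ : β) : Finset (α × α × β × β) :=
  {t | t.1 ≠ u₁ ∧ X u₂ t.2.2.1 = true ∧ X t.1 v₁ = true ∧ X t.2.1 t.2.2.2 = true ∧
    X t.1 t.2.2.2 = false ∧ X t.2.1 t.2.2.1 = false}

lemma card_type1Switchings (u₁ u₂ : α) (v₁ : β) :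
    #(type1Switchings X u₁ u₂ v₁) =
      ∑ p ∈ neighbourChoices X u₁ u₂ v₁, #(edgeChoices X p.1 p.2) := by
  rw [card_eq_sum_card_fiberwise (f := fun t => (t.1, t.2.2.1))]
  · refine sum_congr rfl fun p hp => ?_
    refine card_nbij' (fun t => (t.2.1, t.2.2.2)) (fun q => (p.1, q.1, p.2, q.2)) ?_ ?_ ?_ ?_
    · intro t ht
      obtain ⟨ht, rfl⟩ := mem_filter.1 ht
      simp_all [type1Switchings, edgeChoices, edges]
    · intro q hq
      simp_all [type1Switchings, edgeChoices, edges, neighbourChoices]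
    · intro t ht
      obtain ⟨-, rfl⟩ := mem_filter.1 ht
      rfl
    · intro q _
      rfl
  · intro t ht
    simp_all [type1Switchings, neighbourChoices]

section Counting

variable {X} {d₁ d₂ : ℕ}

lemma card_neighbourChoices_add (hr : ∀ u, #{v | X u v} = d₁) (hc : ∀ v, #{u | X u v} = d₂)
    {u₁ : α} (u₂ : α) {v₁ : β} (h₁ : X u₁ v₁) :
    #(neighbourChoices X u₁ u₂ v₁) + d₁ = d₂ * d₁ := by
  have hcol : #({u | u ≠ u₁ ∧ X u v₁} : Finset α) + 1 = d₂ := by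
    have hu₁ : u₁ ∈ ({u | X u v₁} : Finset α) := by simpa using h₁
    rw [← hc v₁, ← card_erase_add_one hu₁, ← filter_erase, ← filter_ne', filter_filter]
  rw [neighbourChoices, card_product, hr, ← hcol, add_one_mul]

lemma card_type1Switchings_add_le (hr : ∀ u, #{v | X u v} = d₁) (hc : ∀ v, #{u | X u v} = d₂)
    (u₁ u₂ : α) (v₁ : β) :
    #(type1Switchings X u₁ u₂ v₁) + #(neighbourChoices X u₁ u₂ v₁) * (d₂ * d₁) ≤
      #(neighbourChoices X u₁ u₂ v₁) * (Fintype.card α * d₁) := by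
  rw [card_type1Switchings]
  calc _ = ∑ p ∈ neighbourChoices X u₁ u₂ v₁, (#(edgeChoices X p.1 p.2) + d₂ * d₁) := by
        rw [sum_add_distrib, sum_const, smul_eq_mul]
    _ ≤ _ := sum_le_card_nsmul _ _ _ fun p _ => card_edgeChoices_add_le hr hc p.1 p.2

lemma le_card_type1Switchings_add (hr : ∀ u, #{v | X u v} = d₁) (hc : ∀ v, #{u | X u v} = d₂)
    (u₁ u₂ : α) (v₁ : β) :
    #(neighbourChoices X u₁ u₂ v₁) * (Fintype.card α * d₁) ≤
      #(type1Switchings X u₁ u₂ v₁) + #(neighbourChoices X u₁ u₂ v₁) * (d₁ * d₂ + d₂ * d₁) := by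
  rw [card_type1Switchings]
  calc _ ≤ ∑ p ∈ neighbourChoices X u₁ u₂ v₁, (#(edgeChoices X p.1 p.2) + (d₁ * d₂ + d₂ * d₁)) :=
        card_nsmul_le_sum _ _ _ fun p _ => (le_card_edgeChoices_add hr hc p.1 p.2).trans_eq
          (add_assoc _ _ _)
    _ = _ := by rw [sum_add_distrib, sum_const, smul_eq_mul]

end Counting

end Switchings

theorem type1_forward_switching_count_general (n m d₁ d₂ : ℕ)
    (X : Fin n → Fin m → Bool) (hX : X ∈ BBG n m d₁ d₂)
    (u₁ u₂ : Fin n) (v₁ : Fin m)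
    (h₁ : X u₁ v₁ = true) :
    (d₁ : ℝ) ^ 2 * ((d₂ : ℝ) - 1) * ((n : ℝ) - 2 * d₂) ≤
      ((Finset.univ.filter fun t : Fin n × Fin n × Fin m × Fin m =>
          t.1 ≠ u₁ ∧
          X u₂ t.2.2.1 = true ∧ X t.1 v₁ = true ∧ X t.2.1 t.2.2.2 = true ∧
          X t.1 t.2.2.2 = false ∧ X t.2.1 t.2.2.1 = false).card : ℝ) ∧
    ((Finset.univ.filter fun t : Fin n × Fin n × Fin m × Fin m =>
          t.1 ≠ u₁ ∧
          X u₂ t.2.2.1 = true ∧ X t.1 v₁ = true ∧ X t.2.1 t.2.2.2 = true ∧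
          X t.1 t.2.2.2 = false ∧ X t.2.1 t.2.2.1 = false).card : ℝ)
      ≤ (d₁ : ℝ) ^ 2 * ((d₂ : ℝ) - 1) * ((n : ℝ) - d₂) := by
  obtain ⟨-, hr, hc⟩ := mem_filter.1 hX
  simp only [← card_filter] at hr hc
  have hP : (#(neighbourChoices X u₁ u₂ v₁) : ℝ) = (d₂ - 1) * d₁ := by
    have := card_neighbourChoices_add hr hc u₂ h₁
    rify at this
    linarith
  have hlo := le_card_type1Switchings_add hr hc u₁ u₂ v₁
  have hhi := card_type1Switchings_add_le hr hc u₁ u₂ v₁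
  rw [Fintype.card_fin] at hlo hhi
  rify at hlo hhi
  rw [hP] at hlo hhi
  change _ ≤ (#(type1Switchings X u₁ u₂ v₁) : ℝ) ∧ (#(type1Switchings X u₁ u₂ v₁) : ℝ) ≤ _
  constructor <;> linarith

/-- Counting valid Type 1 forward switchings: tuples `(u₃, u₄, v₂, v₃)` such that
`(u₁,u₂,u₃,u₄,v₁,v₂,v₃)` is a valid Type 1 forward switching for `X`. -/
theorem type1_forward_switching_count (n m d₁ d₂ : ℕ)
    (hn : 0 < n) (hm : 0 < m) (hd₁ : 0 < d₁) (hd₂ : 0 < d₂)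
    (hbal : n * d₁ = m * d₂)
    (X : Fin n → Fin m → Bool) (hX : X ∈ BBG n m d₁ d₂)
    (u₁ u₂ : Fin n) (hu : u₁ ≠ u₂) (v₁ : Fin m)
    (h₁ : X u₁ v₁ = true) (h₂ : X u₂ v₁ = false) :
    (d₁ : ℝ) ^ 2 * ((d₂ : ℝ) - 1) * ((n : ℝ) - 2 * d₂) ≤
      ((Finset.univ.filter fun t : Fin n × Fin n × Fin m × Fin m =>
          t.1 ≠ u₁ ∧
          X u₂ t.2.2.1 = true ∧ X t.1 v₁ = true ∧ X t.2.1 t.2.2.2 = true ∧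
          X t.1 t.2.2.2 = false ∧ X t.2.1 t.2.2.1 = false).card : ℝ) ∧
    ((Finset.univ.filter fun t : Fin n × Fin n × Fin m × Fin m =>
          t.1 ≠ u₁ ∧
          X u₂ t.2.2.1 = true ∧ X t.1 v₁ = true ∧ X t.2.1 t.2.2.2 = true ∧
          X t.1 t.2.2.2 = false ∧ X t.2.1 t.2.2.1 = false).card : ℝ)
      ≤ (d₁ : ℝ) ^ 2 * ((d₂ : ℝ) - 1) * ((n : ℝ) - d₂) :=
  type1_forward_switching_count_general n m d₁ d₂ X hX u₁ u₂ v₁ h₁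
end
end

section
/- Let X ∈ 𝒢(n,m,d₁,d₂) and fix distinct u₁, u₂ ∈ [n] and v₁ ∈ [m] with X_{u₁v₁} = 1 and X_{u₂v₁} = 1. Let t^{(1)}_{u₁u₂v₁} be the number of tuples (u₃, u₄, v₂, v₃) with u₃, u₄ ∈ [n], v₂, v₃ ∈ [m], X_{u₃v₃} = X_{u₄v₂} = 1, and X_{u₂v₂} = X_{u₃v₁} = X_{u₄v₃} = 0 (i.e., (u₁,u₂,u₃,u₄,v₁,v₂,v₃) is a valid Type 1 backward switching for X). Then d₁²·(n − d₂)·(n − 2d₂) ≤ t^{(1)}_{u₁u₂v₁} ≤ d₁²·(n − d₂)². -/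
open scoped Classical BigOperators

noncomputable section

/-!
A switching consists of an edge `u₃v₃` with `u₃v₁` a non-edge and an edge `u₄v₂` with `u₂v₂` and
`u₄v₃` non-edges; the second condition involves `v₃` but not `u₃`. There are `d₁(n - d₂)` choices
of `u₃v₃`. Given `v₃`, the edges `u₄v₂` with `u₂v₂` a non-edge number `d₂(m - d₁) = d₁(n - d₂)`,
and at most `d₁d₂` of them have `u₄` among the `d₂` neighbours of `v₃`.
-/

open Finset

theorem mem_BBG_iff {n m d₁ d₂ : ℕ} {X : Fin n → Fin m → Bool} :
    X ∈ BBG n m d₁ d₂ ↔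
      (∀ u, #{v | X u v = true} = d₁) ∧ (∀ v, #{u | X u v = true} = d₂) := by
  simp only [BBG, mem_filter, mem_univ, true_and, card_filter]

theorem card_filter_false_add_card_filter_true {β : Type*} [Fintype β] (f : β → Bool) :
    #{v | f v = false} + #{v | f v = true} = Fintype.card β := by
  rw [add_comm, ← card_univ, ← card_filter_add_card_filter_not (s := univ) (fun v => f v = true)]
  simp only [Bool.not_eq_true]

section Biregular

variable {α β : Type*} [Fintype α] [Fintype β] (X : α → β → Bool)

theorem card_adj_filter_snd {d : ℕ} (hcol : ∀ v, #{u | X u v = true} = d) (p : β → Prop)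
    [DecidablePred p] :
    #{e : α × β | X e.1 e.2 = true ∧ p e.2} = d * #{v | p v} := by
  rw [card_filter, Fintype.sum_prod_type_right, card_filter, mul_sum]
  refine sum_congr rfl fun v _ => ?_
  by_cases hp : p v <;> simp [hp, ← hcol v]

theorem card_adj_filter_fst {d : ℕ} (hrow : ∀ u, #{v | X u v = true} = d) (p : α → Prop)
    [DecidablePred p] :
    #{e : α × β | X e.1 e.2 = true ∧ p e.1} = d * #{u | p u} := by
  rw [card_filter, Fintype.sum_prod_type, card_filter, mul_sum]
  refine sum_congr rfl fun u _ => ?_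
  by_cases hp : p u <;> simp [hp, ← hrow u]

variable {X}

theorem card_fiber_le {d₂ : ℕ} (hcol : ∀ v, #{u | X u v = true} = d₂) (u₂ : α) (v₃ : β) :
    #{f : α × β | X f.1 f.2 = true ∧ X u₂ f.2 = false ∧ X f.1 v₃ = false} ≤
      d₂ * #{v | X u₂ v = false} := by
  rw [← card_adj_filter_snd X hcol]
  exact card_le_card fun f => by simp +contextual

theorem card_fiber_add_ge {d₁ d₂ : ℕ} (hrow : ∀ u, #{v | X u v = true} = d₁)
    (hcol : ∀ v, #{u | X u v = true} = d₂) (u₂ : α) (v₃ : β) :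
    d₂ * #{v | X u₂ v = false} ≤
      #{f : α × β | X f.1 f.2 = true ∧ X u₂ f.2 = false ∧ X f.1 v₃ = false} + d₁ * d₂ := by
  have hbad : #{f : α × β | (X f.1 f.2 = true ∧ X u₂ f.2 = false) ∧ ¬X f.1 v₃ = false} ≤
      d₁ * d₂ :=
    calc _ ≤ #{f : α × β | X f.1 f.2 = true ∧ X f.1 v₃ = true} :=
          card_le_card fun f => by simp +contextual
      _ = d₁ * d₂ := by rw [card_adj_filter_fst X hrow (fun u => X u v₃ = true), hcol]
  rw [← card_adj_filter_snd X hcol (fun v => X u₂ v = false),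
    ← card_filter_add_card_filter_not (fun f : α × β => X f.1 v₃ = false), filter_filter,
    filter_filter]
  simp only [and_assoc] at hbad ⊢
  exact add_le_add_right hbad _

theorem card_switchings_eq_sum (u₂ : α) (v₁ : β) :
    #{t : α × α × β × β | X t.1 t.2.2.2 = true ∧ X t.2.1 t.2.2.1 = true ∧
        X u₂ t.2.2.1 = false ∧ X t.1 v₁ = false ∧ X t.2.1 t.2.2.2 = false} =
      ∑ e ∈ {e : α × β | X e.1 e.2 = true ∧ X e.1 v₁ = false},
        #{f : α × β | X f.1 f.2 = true ∧ X u₂ f.2 = false ∧ X f.1 e.2 = false} := by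
  rw [← card_sigma]
  refine card_nbij' (fun t => ⟨(t.1, t.2.2.2), (t.2.1, t.2.2.1)⟩)
    (fun s => (s.1.1, s.2.1, s.2.2, s.1.2)) ?_ ?_ ?_ ?_ <;> intro <;> simp +contextual

theorem card_switchings_le {d₂ : ℕ} (hcol : ∀ v, #{u | X u v = true} = d₂) (u₂ : α) (v₁ : β) :
    #{t : α × α × β × β | X t.1 t.2.2.2 = true ∧ X t.2.1 t.2.2.1 = true ∧
        X u₂ t.2.2.1 = false ∧ X t.1 v₁ = false ∧ X t.2.1 t.2.2.2 = false} ≤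
      #{e : α × β | X e.1 e.2 = true ∧ X e.1 v₁ = false} * (d₂ * #{v | X u₂ v = false}) := by
  rw [card_switchings_eq_sum, ← smul_eq_mul]
  exact sum_le_card_nsmul _ _ _ fun e _ => card_fiber_le hcol u₂ e.2

theorem card_switchings_add_ge {d₁ d₂ : ℕ} (hrow : ∀ u, #{v | X u v = true} = d₁)
    (hcol : ∀ v, #{u | X u v = true} = d₂) (u₂ : α) (v₁ : β) :
    #{e : α × β | X e.1 e.2 = true ∧ X e.1 v₁ = false} * (d₂ * #{v | X u₂ v = false}) ≤
      #{t : α × α × β × β | X t.1 t.2.2.2 = true ∧ X t.2.1 t.2.2.1 = true ∧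
          X u₂ t.2.2.1 = false ∧ X t.1 v₁ = false ∧ X t.2.1 t.2.2.2 = false} +
        #{e : α × β | X e.1 e.2 = true ∧ X e.1 v₁ = false} * (d₁ * d₂) := by
  rw [card_switchings_eq_sum, ← smul_eq_mul (#_), ← sum_const, ← smul_eq_mul (#_), ← sum_const,
    ← sum_add_distrib]
  exact sum_le_sum fun e _ => card_fiber_add_ge hrow hcol u₂ e.2

end Biregular

theorem type1_backward_switching_count_general (n m d₁ d₂ : ℕ)
    (hbal : n * d₁ = m * d₂)
    (X : Fin n → Fin m → Bool) (hX : X ∈ BBG n m d₁ d₂)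
    (u₂ : Fin n) (v₁ : Fin m) :
    (d₁ : ℝ) ^ 2 * ((n : ℝ) - d₂) * ((n : ℝ) - 2 * d₂) ≤
      ((Finset.univ.filter fun t : Fin n × Fin n × Fin m × Fin m =>
          X t.1 t.2.2.2 = true ∧ X t.2.1 t.2.2.1 = true ∧
          X u₂ t.2.2.1 = false ∧ X t.1 v₁ = false ∧ X t.2.1 t.2.2.2 = false).card : ℝ) ∧
    ((Finset.univ.filter fun t : Fin n × Fin n × Fin m × Fin m =>
          X t.1 t.2.2.2 = true ∧ X t.2.1 t.2.2.1 = true ∧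
          X u₂ t.2.2.1 = false ∧ X t.1 v₁ = false ∧ X t.2.1 t.2.2.2 = false).card : ℝ)
      ≤ (d₁ : ℝ) ^ 2 * ((n : ℝ) - d₂) ^ 2 := by
  obtain ⟨hrow, hcol⟩ := mem_BBG_iff.1 hX
  have hrow₂ : (#{v | X u₂ v = false} : ℝ) + d₁ = m := by
    exact_mod_cast (hrow u₂ ▸ card_filter_false_add_card_filter_true (X u₂)).trans
      (Fintype.card_fin m)
  have hK : (#{u | X u v₁ = false} : ℝ) = n - d₂ := eq_sub_of_add_eq <| by
    exact_mod_cast (hcol v₁ ▸ card_filter_false_add_card_filter_true (X · v₁)).trans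
      (Fintype.card_fin n)
  have hbalR : (n : ℝ) * d₁ = m * d₂ := by exact_mod_cast hbal
  have hF : (d₂ : ℝ) * #{v | X u₂ v = false} = d₁ * (n - d₂) := by
    linear_combination d₂ * hrow₂ - hbalR
  have hE := card_adj_filter_fst X hrow (fun u => X u v₁ = false)
  have hge := Nat.cast_le (α := ℝ).2 (card_switchings_add_ge hrow hcol u₂ v₁)
  have hle := Nat.cast_le (α := ℝ).2 (card_switchings_le hcol u₂ v₁)
  rw [hE] at hge hle
  push_cast at hge hle
  rw [hK, hF] at hge hle
  exact ⟨by linear_combination hge, by linear_combination hle⟩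

/-- Counting valid Type 1 backward switchings: tuples `(u₃, u₄, v₂, v₃)` such that
`(u₁,u₂,u₃,u₄,v₁,v₂,v₃)` is a valid Type 1 backward switching for `X`. -/
theorem type1_backward_switching_count (n m d₁ d₂ : ℕ)
    (hn : 0 < n) (hm : 0 < m) (hd₁ : 0 < d₁) (hd₂ : 0 < d₂)
    (hbal : n * d₁ = m * d₂)
    (X : Fin n → Fin m → Bool) (hX : X ∈ BBG n m d₁ d₂)
    (u₁ u₂ : Fin n) (hu : u₁ ≠ u₂) (v₁ : Fin m)
    (h₁ : X u₁ v₁ = true) (h₂ : X u₂ v₁ = true) :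
    (d₁ : ℝ) ^ 2 * ((n : ℝ) - d₂) * ((n : ℝ) - 2 * d₂) ≤
      ((Finset.univ.filter fun t : Fin n × Fin n × Fin m × Fin m =>
          X t.1 t.2.2.2 = true ∧ X t.2.1 t.2.2.1 = true ∧
          X u₂ t.2.2.1 = false ∧ X t.1 v₁ = false ∧ X t.2.1 t.2.2.2 = false).card : ℝ) ∧
    ((Finset.univ.filter fun t : Fin n × Fin n × Fin m × Fin m =>
          X t.1 t.2.2.2 = true ∧ X t.2.1 t.2.2.1 = true ∧
          X u₂ t.2.2.1 = false ∧ X t.1 v₁ = false ∧ X t.2.1 t.2.2.2 = false).card : ℝ)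
      ≤ (d₁ : ℝ) ^ 2 * ((n : ℝ) - d₂) ^ 2 :=
  type1_backward_switching_count_general n m d₁ d₂ hbal X hX u₂ v₁
end
end
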